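/- For every μ ∈ ℝ with μ ≠ 0, the operator H_{μ0} has exactly one even eigenvalue ζ(μ) outside [0,2] (i.e. there is exactly one real z with z < 0 or z > 2 that is an even eigenvalue); moreover ζ(μ) ∈ (2, +∞) if μ > 0, and ζ(μ) ∈ (−∞, 0) if μ < 0. -/
import Mathlib


open MeasureTheory Real Filter Topology

/-- The potential `v(0) = μ`, `v(±1) = λ/2`, `v(x) = 0` for `|x| > 1`. -/
noncomputable def pot (μ lam : ℝ) (x : ℤ) : ℝ :=
  if x = 0 then μ else if x = 1 ∨ x = -1 then lam / 2 else 0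

/-- A real number `z` is an *even eigenvalue* of the discrete Schrödinger operator
`H_{μλ}` on `ℓ²(ℤ; ℂ)`, `(H_{μλ}ψ)(x) = ψ(x) − (ψ(x+1) + ψ(x−1))/2 + v(x)ψ(x)`,
if there is a nonzero even `ψ ∈ ℓ²(ℤ; ℂ)` with `H_{μλ}ψ = zψ`. -/
def IsEvenEigenvalue (μ lam z : ℝ) : Prop :=
  ∃ ψ : lp (fun _ : ℤ => ℂ) 2, ψ ≠ 0 ∧ (∀ x : ℤ, ψ (-x) = ψ x) ∧
    ∀ x : ℤ, ψ x - (ψ (x + 1) + ψ (x - 1)) / 2 + (pot μ lam x : ℂ) * ψ x = (z : ℂ) * ψ x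

lemma memlp_geom {r : ℝ} (hr : |r| < 1) :
    Memℓp (fun x : ℤ => ((r ^ x.natAbs : ℝ) : ℂ)) 2 := by
  apply memℓp_gen
  have h2 : ((2:ENNReal)).toReal = 2 := by norm_num
  rw [h2]
  have : ∀ x : ℤ, ‖((r ^ x.natAbs : ℝ) : ℂ)‖ ^ (2:ℝ) = (|r|^2) ^ x.natAbs := by
    intro x
    rw [Complex.norm_real, show (2:ℝ) = ((2:ℕ):ℝ) by norm_num, Real.rpow_natCast]
    rw [Real.norm_eq_abs, abs_pow, ← pow_mul, ← pow_mul, Nat.mul_comm]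
  simp_rw [this]
  have hlt : |r|^2 < 1 := by nlinarith [abs_nonneg r]
  have hge : (0:ℝ) ≤ |r|^2 := by positivity
  apply Summable.of_nat_of_neg <;>
    simpa using summable_geometric_of_lt_one hge hlt

lemma pot_zero_ne {μ : ℝ} {x : ℤ} (hx : x ≠ 0) : pot μ 0 x = 0 := by
  simp only [pot, if_neg hx]
  split <;> norm_num

lemma exists_ev {μ r : ℝ} (hr1 : |r| < 1) (hrq : r^2 = 2*μ*r + 1) :
    IsEvenEigenvalue μ 0 (1 + μ - r) := by
  set z : ℝ := 1 + μ - r with hz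
  set f : ∀ _ : ℤ, ℂ := fun x => ((r ^ x.natAbs : ℝ) : ℂ) with hf
  have hmem : f ∈ lp (fun _ : ℤ => ℂ) 2 := memlp_geom hr1
  refine ⟨⟨f, hmem⟩, ?_, ?_, ?_⟩
  · intro h
    have h0 : f 0 = 0 := by
      have := congrArg (fun g : lp (fun _ : ℤ => ℂ) 2 => g 0) h
      simpa using this
    simp [hf] at h0
  · intro x
    show f (-x) = f x
    simp [hf, Int.natAbs_neg]
  · intro x
    show f x - (f (x+1) + f (x-1))/2 + (pot μ 0 x : ℂ) * f x = (z:ℂ) * f x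
    -- the symmetric function trick: wlog x ≥ 0
    have hsym : ∀ y : ℤ, f (-y) = f y := fun y => by simp [hf, Int.natAbs_neg]
    have main : ∀ x : ℤ, 0 ≤ x →
        f x - (f (x+1) + f (x-1))/2 + (pot μ 0 x : ℂ) * f x = (z:ℂ) * f x := by
      intro x hx
      rcases eq_or_lt_of_le hx with h0 | h1
      · -- x = 0
        subst h0
        have v0 : f (0:ℤ) = 1 := by simp [hf]
        have v1 : f ((0:ℤ)+1) = (r:ℂ) := by norm_num [hf]
        have v2 : f ((0:ℤ)-1) = (r:ℂ) := by norm_num [hf]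
        have vp : pot μ 0 0 = μ := by simp [pot]
        rw [v0, v1, v2, vp, hz]
        push_cast
        ring
      · -- x ≥ 1
        obtain ⟨n, hn⟩ := Int.eq_ofNat_of_zero_le (by linarith : (0:ℤ) ≤ x - 1)
        have hx0 : x ≠ 0 := by omega
        have hxx : x = (n:ℤ) + 1 := by omega
        subst hxx
        have e1 : ((n:ℤ)+1).natAbs = n + 1 := by omega
        have e2 : ((n:ℤ)+1+1).natAbs = n + 2 := by omega
        have e3 : ((n:ℤ)+1-1).natAbs = n := by omega
        have v1 : f ((n:ℤ)+1) = ((r^(n+1):ℝ):ℂ) := by simp only [hf]; rw [e1]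
        have v2 : f ((n:ℤ)+1+1) = ((r^(n+2):ℝ):ℂ) := by simp only [hf]; rw [e2]
        have v3 : f ((n:ℤ)+1-1) = ((r^n:ℝ):ℂ) := by simp only [hf]; rw [e3]
        have hre : r^(n+1) - (r^(n+2) + r^n)/2 = z * r^(n+1) := by
          rw [hz]; linear_combination (r^n/2) * hrq
        rw [v1, v2, v3, pot_zero_ne hx0, Complex.ofReal_zero, zero_mul, add_zero]
        exact_mod_cast hre
    rcases le_or_gt 0 x with hx | hx
    · exact main x hx
    · have := main (-x) (by linarith)
      rw [show -x + 1 = -(x-1) by ring, show -x - 1 = -(x+1) by ring,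
        hsym, hsym, hsym] at this
      have hpot : pot μ 0 (-x) = pot μ 0 x := by
        unfold pot
        split_ifs <;> first | rfl | omega
      rw [hpot] at this
      linear_combination this

lemma quad_uniq {μ r s : ℝ} (hr : |r| < 1) (hs : |s| < 1)
    (hrq : r^2 = 2*μ*r + 1) (hsq : s^2 = 2*μ*s + 1) : s = r := by
  by_contra hne
  have hsum : s + r = 2*μ := by
    have h := sub_ne_zero.mpr hne
    have h2 : (s - r) * (s + r - 2*μ) = 0 := by nlinarith
    rcases mul_eq_zero.mp h2 with h' | h'
    · exact absurd h' h
    · linarith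
  have hprod : s * r = -1 := by linear_combination s*hsum - hsq
  have habs : |s| * |r| = 1 := by rw [← abs_mul, hprod]; norm_num
  nlinarith [abs_nonneg s, abs_nonneg r]

lemma uniq_core {μ z : ℝ} (hz : z < 0 ∨ 2 < z) (h : IsEvenEigenvalue μ 0 z) :
    ∃ s : ℝ, |s| < 1 ∧ s^2 = 2*μ*s + 1 ∧ z = 1 + μ - s := by
  obtain ⟨ψ, hne, hev, heq⟩ := h
  set w : ℝ := 1 - z with hw
  have hw1 : 1 < w^2 := by rcases hz with h|h <;> nlinarith
  have hd2 : Real.sqrt (w^2-1)^2 = w^2 - 1 := Real.sq_sqrt (by linarith)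
  have hd0 : 0 < Real.sqrt (w^2-1) := Real.sqrt_pos.2 (by linarith)
  set d := Real.sqrt (w^2-1) with hdd
  set s : ℝ := if 0 < w then w - d else w + d with hs
  have hsq : s^2 - 2*w*s + 1 = 0 := by
    rw [hs]; split_ifs <;> nlinarith
  have hs1 : |s| < 1 := by
    rw [hs, abs_lt]; split_ifs with h'
    · have hwgt : 1 < w := by nlinarith
      constructor <;> nlinarith
    · push_neg at h'
      have hwlt : w < -1 := by nlinarith
      constructor <;> nlinarith
  set t : ℝ := 2*w - s with ht
  have hst : s * t = 1 := by rw [ht]; nlinarith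
  have hs0 : 0 < |s| := by
    rcases eq_or_ne s 0 with h'|h'
    · exfalso; rw [h'] at hst; simp at hst
    · exact abs_pos.2 h'
  have hstabs : |s| * |t| = 1 := by rw [← abs_mul, hst]; norm_num
  have ht1 : 1 < |t| := by nlinarith
  have hts : t ≠ s := by
    intro h'
    rw [h'] at hst
    nlinarith [abs_mul_abs_self s]
  have htsC : (t:ℂ) - (s:ℂ) ≠ 0 := sub_ne_zero.2 (by exact_mod_cast hts)
  set A : ℂ := ((t:ℂ) * ψ 0 - ψ 1) / ((t:ℂ) - (s:ℂ)) with hA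
  set B : ℂ := (ψ 1 - (s:ℂ) * ψ 0) / ((t:ℂ) - (s:ℂ)) with hB
  have hrec : ∀ n : ℕ, ψ ((n:ℤ)+2) = 2*(w:ℂ)*ψ ((n:ℤ)+1) - ψ (n:ℤ) := by
    intro n
    have h1 := heq ((n:ℤ)+1)
    rw [pot_zero_ne (by omega : ((n:ℤ)+1) ≠ 0)] at h1
    rw [show ((n:ℤ)+1+1) = (n:ℤ)+2 by ring, show ((n:ℤ)+1-1) = (n:ℤ) by ring] at h1
    rw [hw]
    push_cast
    push_cast at h1
    linear_combination (-2:ℂ) * h1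
  have hsC : (s:ℂ)^2 = 2*(w:ℂ)*(s:ℂ) - 1 := by
    have : s^2 = 2*w*s - 1 := by linarith [hsq]
    exact_mod_cast this
  have htC : (t:ℂ)^2 = 2*(w:ℂ)*(t:ℂ) - 1 := by
    have : t^2 = 2*w*t - 1 := by rw [ht]; nlinarith [hsq]
    exact_mod_cast this
  have base0 : ψ ((0:ℕ):ℤ) = A * (s:ℂ)^0 + B * (t:ℂ)^0 := by
    rw [hA, hB]; push_cast; field_simp; ring
  have base1 : ψ (((0:ℕ):ℤ)+1) = A * (s:ℂ)^1 + B * (t:ℂ)^1 := by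
    rw [hA, hB]; push_cast; field_simp; ring
  have key : ∀ n : ℕ, ψ (n:ℤ) = A * (s:ℂ)^n + B*(t:ℂ)^n ∧
      ψ ((n:ℤ)+1) = A*(s:ℂ)^(n+1) + B*(t:ℂ)^(n+1) := by
    intro n
    induction n with
    | zero => exact ⟨by simpa using base0, by simpa using base1⟩
    | succ m ih =>
      constructor
      · rw [show (((m+1:ℕ)):ℤ) = (m:ℤ)+1 by push_cast; ring]
        exact ih.2
      · rw [show (((m+1:ℕ)):ℤ)+1 = (m:ℤ)+2 by push_cast; ring, hrec m, ih.1, ih.2]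
        push_cast
        linear_combination (-(A*(s:ℂ)^m)) * hsC - (B*(t:ℂ)^m) * htC
  have hform : ∀ n : ℕ, ψ (n:ℤ) = A * (s:ℂ)^n + B * (t:ℂ)^n := fun n => (key n).1
  -- summability and decay
  have hsum : Summable fun x : ℤ => ‖ψ x‖ ^ 2 := by
    have hmem := lp.memℓp ψ
    have h1 := hmem.summable (p := 2) (by norm_num)
    have h2 : ((2:ENNReal)).toReal = 2 := by norm_num
    rw [h2] at h1
    have h3 : (fun x : ℤ => ‖ψ x‖ ^ (2:ℝ)) = fun x : ℤ => ‖ψ x‖ ^ 2 :=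
      funext fun x => by
        rw [show (2:ℝ) = ((2:ℕ):ℝ) by norm_num, Real.rpow_natCast]
    rwa [h3] at h1
  have hten : Tendsto (fun n : ℕ => ‖ψ ((n:ℤ))‖ ^ 2) atTop (nhds 0) := by
    have h1 := hsum.tendsto_cofinite_zero
    have h2 : Tendsto (fun n : ℕ => (n:ℤ)) cofinite cofinite :=
      Function.Injective.tendsto_cofinite (fun a b hab => by omega)
    have h3 := h1.comp h2
    rwa [Nat.cofinite_eq_atTop] at h3
  have hsmall : ∀ᶠ n : ℕ in atTop, ‖ψ (n:ℤ)‖ < 1 := by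
    filter_upwards [hten.eventually (gt_mem_nhds one_pos)] with n hn
    nlinarith [norm_nonneg (ψ (n:ℤ))]
  have hB0 : B = 0 := by
    by_contra hB0
    have hnB : 0 < ‖B‖ := norm_pos_iff.2 hB0
    have hgrow : Tendsto (fun n : ℕ => ‖B‖ * |t|^n) atTop atTop :=
      (tendsto_pow_atTop_atTop_of_one_lt ht1).const_mul_atTop hnB
    have hdecay : Tendsto (fun n : ℕ => ‖A‖ * |s|^n) atTop (nhds 0) := by
      simpa using (tendsto_pow_atTop_nhds_zero_of_lt_one (abs_nonneg s) hs1).const_mul ‖A‖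
    have hev2 : ∀ᶠ n : ℕ in atTop, ‖A‖ * |s|^n < 1 := hdecay.eventually (gt_mem_nhds one_pos)
    have hev3 : ∀ᶠ n : ℕ in atTop, 2 < ‖B‖ * |t|^n := hgrow.eventually_gt_atTop 2
    obtain ⟨n, h1, h2, h3⟩ := (hsmall.and (hev2.and hev3)).exists
    have hbound : ‖B‖ * |t|^n ≤ ‖ψ (n:ℤ)‖ + ‖A‖ * |s|^n := by
      have hBt : B * (t:ℂ)^n = ψ (n:ℤ) - A * (s:ℂ)^n := by rw [hform n]; ring
      calc ‖B‖ * |t|^n = ‖B * (t:ℂ)^n‖ := by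
            rw [norm_mul, norm_pow, Complex.norm_real, Real.norm_eq_abs]
        _ = ‖ψ (n:ℤ) - A * (s:ℂ)^n‖ := by rw [hBt]
        _ ≤ ‖ψ (n:ℤ)‖ + ‖A * (s:ℂ)^n‖ := norm_sub_le _ _
        _ = ‖ψ (n:ℤ)‖ + ‖A‖ * |s|^n := by
            rw [norm_mul, norm_pow, Complex.norm_real, Real.norm_eq_abs]
    linarith
  have hA0 : A ≠ 0 := by
    intro hA0
    apply hne
    rw [lp.eq_zero_iff_coeFn_eq_zero]
    funext x
    have hzero : ∀ n : ℕ, ψ (n:ℤ) = 0 := fun n => by rw [hform n, hA0, hB0]; ring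
    show ψ x = 0
    rcases le_or_gt 0 x with hx|hx
    · obtain ⟨n, rfl⟩ := Int.eq_ofNat_of_zero_le hx
      exact hzero n
    · obtain ⟨n, hn⟩ := Int.eq_ofNat_of_zero_le (le_of_lt (neg_pos.2 hx))
      have h' := hev (-x)
      rw [neg_neg] at h'
      rw [h', hn]
      exact hzero n
  have h0 := heq 0
  have hpot0 : pot μ 0 0 = μ := by simp [pot]
  rw [hpot0] at h0
  have hm1 : ψ (-1:ℤ) = ψ (1:ℤ) := hev 1
  have hψ0 : ψ (0:ℤ) = A := by
    have h := hform 0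
    rw [hB0] at h
    simp only [Nat.cast_zero, pow_zero, mul_one, zero_mul, add_zero] at h
    exact h
  have hψ1 : ψ (1:ℤ) = A * (s:ℂ) := by
    have h := hform 1
    rw [hB0] at h
    simp only [Nat.cast_one, pow_one, zero_mul, add_zero] at h
    exact h
  rw [show (0:ℤ)+1 = 1 by ring, show (0:ℤ)-1 = -1 by ring, hm1, hψ0, hψ1] at h0
  have hfac : ((1 - s + μ - z : ℝ) : ℂ) * A = 0 := by
    push_cast
    linear_combination h0
  rcases mul_eq_zero.mp hfac with h'|h'
  · have hr : (1 - s + μ - z : ℝ) = 0 := by exact_mod_cast h'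
    refine ⟨s, hs1, ?_, by linarith⟩
    have hws : w = s - μ := by rw [hw]; linarith
    linear_combination (-1)*hsq - 2*s*hws
  · exact absurd h' hA0


/-- For every `μ ≠ 0`, the operator `H_{μ0}` has exactly one even eigenvalue `ζ(μ)`
outside `[0,2]`; moreover `ζ(μ) ∈ (2, +∞)` if `μ > 0`, and `ζ(μ) ∈ (−∞, 0)` if `μ < 0`. -/
theorem unique_even_eigenvalue_Hmu0 (μ : ℝ) (hμ : μ ≠ 0) :
    ∃ ζ : ℝ, ((ζ < 0 ∨ 2 < ζ) ∧ IsEvenEigenvalue μ 0 ζ) ∧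
      (∀ z : ℝ, (z < 0 ∨ 2 < z) → IsEvenEigenvalue μ 0 z → z = ζ) ∧
      (0 < μ → 2 < ζ) ∧ (μ < 0 → ζ < 0) := by
  have hS2 : Real.sqrt (μ^2+1)^2 = μ^2+1 := Real.sq_sqrt (by positivity)
  have hS0 : 0 ≤ Real.sqrt (μ^2+1) := Real.sqrt_nonneg _
  set S := Real.sqrt (μ^2+1) with hSS
  have hμ2 : 0 < μ^2 := by positivity
  have hS1 : 1 < S := by nlinarith
  set r : ℝ := if 0 < μ then μ - S else μ + S with hr
  have hrq : r^2 = 2*μ*r + 1 := by rw [hr]; split_ifs <;> nlinarith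
  have hr1 : |r| < 1 := by
    rw [hr, abs_lt]; split_ifs with h
    · constructor <;> nlinarith
    · have hμneg : μ < 0 := lt_of_le_of_ne (not_lt.mp h) hμ
      constructor <;> nlinarith
  refine ⟨1 + μ - r, ⟨?_, exists_ev hr1 hrq⟩, ?_, ?_, ?_⟩
  · rcases lt_or_gt_of_ne hμ with h|h
    · left; rw [hr, if_neg (by linarith)]; linarith
    · right; rw [hr, if_pos h]; linarith
  · intro z hz hzev
    obtain ⟨s, hs1, hsq, hzs⟩ := uniq_core hz hzev
    rw [hzs, quad_uniq hr1 hs1 hrq hsq]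
  · intro h; rw [hr, if_pos h]; linarith
  · intro h; rw [hr, if_neg (by linarith)]; linarith
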